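/- arXiv:1912.09221 — 6 statements merged into one kernel-verified Lean document; each statement's English description precedes it below -/
import Mathlib

section
/- Let $(A, \mu)$ be an associative algebra and $R : A \to A$ a Rota-Baxter operator of weight 0. Then the operations $a \prec b := \mu(a, R(b))$ and $a \succ b := \mu(R(a), b)$ make $A$ into a dendriform algebra. -/
/-- A Rota-Baxter operator of weight 0 on an associative algebra induces a
dendriform algebra structure via `a ≺ b = μ(a, R b)` and `a ≻ b = μ(R a, b)`. -/
theorem rotaBaxter_induces_dendriform {K A : Type*} [Field K] [AddCommGroup A] [Module K A]
    (μ : A →ₗ[K] A →ₗ[K] A)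
    (hassoc : ∀ a b c : A, μ (μ a b) c = μ a (μ b c))
    (R : A →ₗ[K] A)
    (hR : ∀ a b : A, μ (R a) (R b) = R (μ a (R b) + μ (R a) b)) :
    ∀ a b c : A,
      μ (μ a (R b)) (R c) = μ a (R (μ b (R c) + μ (R b) c)) ∧
      μ (μ (R a) b) (R c) = μ (R a) (μ b (R c)) ∧
      μ (R (μ a (R b) + μ (R a) b)) c = μ (R a) (μ (R b) c) := by
  intro a b c
  refine ⟨?_, hassoc _ _ _, ?_⟩
  · rw [hassoc, hR]
  · rw [← hR, hassoc]
end

section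
/- Let $(V, \mu)$ be an associative algebra and $T : V \otimes V \to V \otimes V$ a weak pseudotwistor with weak companion $\tau$. Then the product $\mu \circ T : V \otimes V \to V$ is associative. -/
open TensorProduct

/-- If `T` is a weak pseudotwistor (with weak companion `τ`) on an associative
algebra `(V, μ)`, then `μ ∘ T` is an associative product on `V`. -/
theorem weakPseudotwistor_assoc {K V : Type*} [Field K] [AddCommGroup V] [Module K V]
    (μ : V ⊗[K] V →ₗ[K] V)
    (hassoc : ∀ a b c : V, μ (μ (a ⊗ₜ b) ⊗ₜ c) = μ (a ⊗ₜ μ (b ⊗ₜ c)))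
    (T : V ⊗[K] V →ₗ[K] V ⊗[K] V)
    (τ : V ⊗[K] (V ⊗[K] V) →ₗ[K] V ⊗[K] (V ⊗[K] V))
    (h1 : T ∘ₗ TensorProduct.map LinearMap.id (μ ∘ₗ T) =
        TensorProduct.map LinearMap.id μ ∘ₗ τ)
    (h2 : T ∘ₗ TensorProduct.map (μ ∘ₗ T) LinearMap.id =
        TensorProduct.map μ LinearMap.id ∘ₗ
          ((TensorProduct.assoc K V V V).symm.toLinearMap ∘ₗ τ ∘ₗ
            (TensorProduct.assoc K V V V).toLinearMap)) :
    ∀ x y z : V,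
      μ (T (μ (T (x ⊗ₜ y)) ⊗ₜ z)) = μ (T (x ⊗ₜ μ (T (y ⊗ₜ z)))) := by
  -- key: μ ∘ (μ ⊗ id) ∘ assoc⁻¹ = μ ∘ (id ⊗ μ) on V ⊗ (V ⊗ V)
  have key : ∀ w : V ⊗[K] (V ⊗[K] V),
      μ (TensorProduct.map μ LinearMap.id ((TensorProduct.assoc K V V V).symm w)) =
      μ (TensorProduct.map LinearMap.id μ w) := by
    intro w
    induction w using TensorProduct.induction_on with
    | zero => simp
    | add a b ha hb => simp [map_add, ha, hb]
    | tmul a bc =>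
      induction bc using TensorProduct.induction_on with
      | zero => simp
      | add b c hb hc => simp_all [tmul_add, map_add]
      | tmul b c => simpa using hassoc a b c
  intro x y z
  have e2 := congrArg (fun f => μ (f ((x ⊗ₜ y) ⊗ₜ z))) h2
  have e1 := congrArg (fun f => μ (f (x ⊗ₜ (y ⊗ₜ z)))) h1
  simp only [LinearMap.comp_apply, TensorProduct.map_tmul, LinearMap.id_apply,
    LinearEquiv.coe_coe, TensorProduct.assoc_tmul] at e1 e2
  rw [e2, e1, key]
end

section
/- Let $(V, \mu)$ be an associative algebra and $R : V \to V$ a Rota-Baxter operator of weight 0. Then the map $T : V^{\otimes 2} \to V^{\otimes 2}$ defined by $T(a \otimes b) = a \otimes R(b) + R(a) \otimes b$ is a weak pseudotwistor with weak companion $\tau(a \otimes b \otimes c) = R(a) \otimes R(b) \otimes c + R(a) \otimes b \otimes R(c) + a \otimes R(b) \otimes R(c)$. -/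
/-!
The Rota-Baxter identity says precisely that `R` intertwines the derived product
`a ⋆ b = a R(b) + R(a) b` with `μ`, that is `R ∘ (μ ∘ T) = μ ∘ (R ⊗ R)`.
Expanding `T ∘ (id ⊗ (μ ∘ T)) = id ⊗ (R ∘ μ ∘ T) + R ⊗ (μ ∘ T)` and applying this once gives
`(id ⊗ μ) ∘ τ` term by term; the second identity is the mirror image, with `τ` conjugated
by the associator.
-/

open TensorProduct LinearMap

section

variable {K V : Type*} [CommSemiring K] [AddCommMonoid V] [Module K V]

def IsRotaBaxter (μ : V ⊗[K] V →ₗ[K] V) (R : V →ₗ[K] V) : Prop :=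
  ∀ a b : V, μ (R a ⊗ₜ R b) = R (μ (a ⊗ₜ R b) + μ (R a ⊗ₜ b))

def rotaBaxterTwistor (R : V →ₗ[K] V) : V ⊗[K] V →ₗ[K] V ⊗[K] V :=
  map id R + map R id

def rotaBaxterMul (μ : V ⊗[K] V →ₗ[K] V) (R : V →ₗ[K] V) : V ⊗[K] V →ₗ[K] V :=
  μ ∘ₗ rotaBaxterTwistor R

def rotaBaxterCompanion (R : V →ₗ[K] V) : V ⊗[K] (V ⊗[K] V) →ₗ[K] V ⊗[K] (V ⊗[K] V) :=
  map R (map R id) + map R (map id R) + map id (map R R)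

theorem assoc_symm_comp_rotaBaxterCompanion_comp_assoc (R : V →ₗ[K] V) :
    (TensorProduct.assoc K V V V).symm.toLinearMap ∘ₗ rotaBaxterCompanion R ∘ₗ
        (TensorProduct.assoc K V V V).toLinearMap =
      map (map R R) id + map (map R id) R + map (map id R) R := by
  simp only [rotaBaxterCompanion, add_comp, comp_add, map_map_comp_assoc_eq, ← comp_assoc,
    ← LinearEquiv.coe_trans, LinearEquiv.self_trans_symm, LinearEquiv.refl_toLinearMap, id_comp]

variable {μ : V ⊗[K] V →ₗ[K] V} {R : V →ₗ[K] V}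

theorem IsRotaBaxter.comp_rotaBaxterMul (hR : IsRotaBaxter μ R) :
    R ∘ₗ rotaBaxterMul μ R = μ ∘ₗ map R R :=
  ext' fun a b => by simpa [rotaBaxterMul, rotaBaxterTwistor] using (hR a b).symm

theorem IsRotaBaxter.rotaBaxterTwistor_comp_map_id_rotaBaxterMul (hR : IsRotaBaxter μ R) :
    rotaBaxterTwistor R ∘ₗ map id (rotaBaxterMul μ R) =
      map id μ ∘ₗ rotaBaxterCompanion R := by
  have expand : rotaBaxterTwistor R ∘ₗ map id (rotaBaxterMul μ R) =
      map id (R ∘ₗ rotaBaxterMul μ R) + map R (rotaBaxterMul μ R) := by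
    simp only [rotaBaxterTwistor, add_comp, ← map_comp, id_comp, comp_id]
  rw [expand, hR.comp_rotaBaxterMul, rotaBaxterMul, rotaBaxterTwistor, rotaBaxterCompanion,
    comp_add, map_add_right]
  simp only [comp_add, ← map_comp, id_comp, comp_id]
  abel

theorem IsRotaBaxter.rotaBaxterTwistor_comp_map_rotaBaxterMul_id (hR : IsRotaBaxter μ R) :
    rotaBaxterTwistor R ∘ₗ map (rotaBaxterMul μ R) id =
      map μ id ∘ₗ ((TensorProduct.assoc K V V V).symm.toLinearMap ∘ₗ rotaBaxterCompanion R ∘ₗ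
        (TensorProduct.assoc K V V V).toLinearMap) := by
  have expand : rotaBaxterTwistor R ∘ₗ map (rotaBaxterMul μ R) id =
      map (rotaBaxterMul μ R) R + map (R ∘ₗ rotaBaxterMul μ R) id := by
    simp only [rotaBaxterTwistor, add_comp, ← map_comp, id_comp, comp_id]
  rw [assoc_symm_comp_rotaBaxterCompanion_comp_assoc, expand, hR.comp_rotaBaxterMul, rotaBaxterMul,
    rotaBaxterTwistor, comp_add, map_add_left]
  simp only [comp_add, ← map_comp, id_comp, comp_id]
  abel

end

theorem rotaBaxter_gives_weakPseudotwistor_general {K V : Type*} [Field K] [AddCommGroup V] [Module K V]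
    (μ : V ⊗[K] V →ₗ[K] V)
    (R : V →ₗ[K] V)
    (hR : ∀ a b : V, μ (R a ⊗ₜ R b) = R (μ (a ⊗ₜ R b) + μ (R a ⊗ₜ b)))
    (T : V ⊗[K] V →ₗ[K] V ⊗[K] V)
    (hT : T = TensorProduct.map LinearMap.id R + TensorProduct.map R LinearMap.id)
    (τ : V ⊗[K] (V ⊗[K] V) →ₗ[K] V ⊗[K] (V ⊗[K] V))
    (hτ : τ = TensorProduct.map R (TensorProduct.map R LinearMap.id) +
        TensorProduct.map R (TensorProduct.map LinearMap.id R) +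
        TensorProduct.map LinearMap.id (TensorProduct.map R R)) :
    T ∘ₗ TensorProduct.map LinearMap.id (μ ∘ₗ T) =
        TensorProduct.map LinearMap.id μ ∘ₗ τ ∧
    T ∘ₗ TensorProduct.map (μ ∘ₗ T) LinearMap.id =
        TensorProduct.map μ LinearMap.id ∘ₗ
          ((TensorProduct.assoc K V V V).symm.toLinearMap ∘ₗ τ ∘ₗ
            (TensorProduct.assoc K V V V).toLinearMap) := by
  subst hT hτ
  exact ⟨IsRotaBaxter.rotaBaxterTwistor_comp_map_id_rotaBaxterMul hR,
    IsRotaBaxter.rotaBaxterTwistor_comp_map_rotaBaxterMul_id hR⟩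

/-- If `R` is a Rota-Baxter operator of weight 0 on an associative algebra
`(V, μ)`, then `T(a ⊗ b) = a ⊗ R(b) + R(a) ⊗ b` is a weak pseudotwistor with
weak companion `τ(a ⊗ b ⊗ c) = R(a) ⊗ R(b) ⊗ c + R(a) ⊗ b ⊗ R(c) + a ⊗ R(b) ⊗ R(c)`. -/
theorem rotaBaxter_gives_weakPseudotwistor {K V : Type*} [Field K] [AddCommGroup V] [Module K V]
    (μ : V ⊗[K] V →ₗ[K] V)
    (hassoc : ∀ a b c : V, μ (μ (a ⊗ₜ b) ⊗ₜ c) = μ (a ⊗ₜ μ (b ⊗ₜ c)))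
    (R : V →ₗ[K] V)
    (hR : ∀ a b : V, μ (R a ⊗ₜ R b) = R (μ (a ⊗ₜ R b) + μ (R a ⊗ₜ b)))
    (T : V ⊗[K] V →ₗ[K] V ⊗[K] V)
    (hT : T = TensorProduct.map LinearMap.id R + TensorProduct.map R LinearMap.id)
    (τ : V ⊗[K] (V ⊗[K] V) →ₗ[K] V ⊗[K] (V ⊗[K] V))
    (hτ : τ = TensorProduct.map R (TensorProduct.map R LinearMap.id) +
        TensorProduct.map R (TensorProduct.map LinearMap.id R) +
        TensorProduct.map LinearMap.id (TensorProduct.map R R)) :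
    T ∘ₗ TensorProduct.map LinearMap.id (μ ∘ₗ T) =
        TensorProduct.map LinearMap.id μ ∘ₗ τ ∧
    T ∘ₗ TensorProduct.map (μ ∘ₗ T) LinearMap.id =
        TensorProduct.map μ LinearMap.id ∘ₗ
          ((TensorProduct.assoc K V V V).symm.toLinearMap ∘ₗ τ ∘ₗ
            (TensorProduct.assoc K V V V).toLinearMap) :=
  rotaBaxter_gives_weakPseudotwistor_general μ R hR T hT τ hτ
end

section
/- Let $T : M \to V$ be an $\mathcal{O}$-operator on an associative algebra $(V, \mu)$ with respect to a bimodule $(M, l, r)$. Then $M$ carries a dendriform algebra structure with $m \prec n := r(m, T(n))$ and $m \succ n := l(T(m), n)$. -/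
/-- An `𝒪`-operator `T : M → V` on an associative algebra `(V, μ)` with respect
to a bimodule `(M, l, r)` induces a dendriform structure on `M` via
`m ≺ n = r(m, T n)` and `m ≻ n = l(T m, n)`. -/
theorem oOperator_induces_dendriform {K V M : Type*} [Field K]
    [AddCommGroup V] [Module K V] [AddCommGroup M] [Module K M]
    (μ : V →ₗ[K] V →ₗ[K] V)
    (hassoc : ∀ a b c : V, μ (μ a b) c = μ a (μ b c))
    (l : V →ₗ[K] M →ₗ[K] M) (r : M →ₗ[K] V →ₗ[K] M)
    (hb1 : ∀ (a b : V) (m : M), l (μ a b) m = l a (l b m))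
    (hb2 : ∀ (a : V) (m : M) (b : V), r (l a m) b = l a (r m b))
    (hb3 : ∀ (m : M) (a b : V), r (r m a) b = r m (μ a b))
    (T : M →ₗ[K] V)
    (hT : ∀ m n : M, μ (T m) (T n) = T (r m (T n) + l (T m) n)) :
    ∀ m n p : M,
      r (r m (T n)) (T p) = r m (T (r n (T p) + l (T n) p)) ∧
      r (l (T m) n) (T p) = l (T m) (r n (T p)) ∧
      l (T (r m (T n) + l (T m) n)) p = l (T m) (l (T n) p) := by
  intro m n p
  refine ⟨?_, hb2 _ _ _, ?_⟩
  · rw [hb3, hT]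
  · rw [← hT, hb1]
end

section
/- Let $A$ be a dendriform algebra with an action of a finite group $G$, and let $c = \{c_H : H \leq G\}$ be an invariant $n$-cochain, meaning that for each subconjugacy relation $g^{-1}Hg \subseteq K$, $c_H \circ (\mathrm{id} \otimes \psi_g^{\otimes n}) = \psi_g \circ c_K$ where $\psi_g$ denotes the action of $g$. Then the dendriform coboundary $\delta^n(c) = \{\delta^n_H(c_H)\}$ is an invariant $(n+1)$-cochain: $\delta^n_H(c_H) \circ (\mathrm{id} \otimes \psi_g^{\otimes n+1}) = \psi_g \circ \delta^n_K(c_K)$. -/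
/-- `2`-cochain encoding of a pair of binary operations. -/
def toC2 {K A : Type*} [Field K] [AddCommGroup A] [Module K A]
    (p s : A →ₗ[K] A →ₗ[K] A) : Fin 2 → (Fin 2 → A) → A :=
  fun r a => if r = 0 then p (a 0) (a 1) else s (a 0) (a 1)

/-- The coboundary operator of the dendriform cochain complex. -/
def dcob {B : Type*} [AddCommGroup B] {n : ℕ}
    (π : Fin 2 → (Fin 2 → B) → B)
    (f : Fin n → (Fin n → B) → B) :
    Fin (n + 1) → (Fin (n + 1) → B) → B := fun r a =>
  (if hr : (r : ℕ) = 0 then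
      π 0 ![a 0, ∑ k : Fin n, f k (fun j => a j.succ)]
    else
      π 1 ![a 0, f ⟨(r : ℕ) - 1, by have := r.isLt; omega⟩ (fun j => a j.succ)])
  + (∑ i : Fin n, ((-1 : ℤ) ^ ((i : ℕ) + 1)) •
      f (if _h1 : (r : ℕ) < (i : ℕ) then ⟨(r : ℕ), by have := i.isLt; omega⟩
         else if _h2 : (r : ℕ) ≤ (i : ℕ) + 1 then ⟨(i : ℕ), i.isLt⟩
         else ⟨(r : ℕ) - 1, by have := r.isLt; omega⟩)
        (fun j =>
          if _h3 : (j : ℕ) < (i : ℕ) then a j.castSucc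
          else if _h4 : (j : ℕ) = (i : ℕ) then
            (if (r : ℕ) = (i : ℕ) then π 0 ![a i.castSucc, a i.succ]
             else if (r : ℕ) = (i : ℕ) + 1 then π 1 ![a i.castSucc, a i.succ]
             else π 0 ![a i.castSucc, a i.succ] + π 1 ![a i.castSucc, a i.succ])
          else a j.succ))
  + ((-1 : ℤ) ^ (n + 1)) •
      (if hrn : (r : ℕ) = n then
        π 1 ![∑ k : Fin n, f k (fun j => a j.castSucc), a (Fin.last n)]
      else
        π 0 ![f ⟨(r : ℕ), by have := r.isLt; omega⟩ (fun j => a j.castSucc),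
              a (Fin.last n)])

/-- The `H`-fixed point submodule `A^H` of a linear `G`-action. -/
def fixedSubmodule {K A G : Type*} [Field K] [AddCommGroup A] [Module K A] [Group G]
    (ρ : G →* Module.End K A) (H : Subgroup G) : Submodule K A where
  carrier := {a : A | ∀ h ∈ H, ρ h a = a}
  add_mem' := by
    intro a b ha hb h hh
    simp [map_add, ha h hh, hb h hh]
  zero_mem' := by intro h hh; simp
  smul_mem' := by
    intro c a ha h hh
    simp [map_smul, ha h hh]

/-- The map `ψ_g : A^K → A^H` induced by a subconjugacy relation `g⁻¹Hg ⊆ K`. -/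
def psiMap {K A G : Type*} [Field K] [AddCommGroup A] [Module K A] [Group G]
    (ρ : G →* Module.End K A) (g : G) (H K' : Subgroup G)
    (hsub : ∀ h ∈ H, g⁻¹ * h * g ∈ K') (x : fixedSubmodule ρ K') :
    fixedSubmodule ρ H :=
  ⟨ρ g (x : A), by
    intro h hh
    have hx : ρ (g⁻¹ * h * g) (x : A) = (x : A) := x.2 _ (hsub h hh)
    have e : ρ h * ρ g = ρ g * ρ (g⁻¹ * h * g) := by
      rw [← map_mul, ← map_mul]; congr 1; group
    calc ρ h (ρ g (x : A)) = (ρ h * ρ g) (x : A) := rfl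
      _ = (ρ g * ρ (g⁻¹ * h * g)) (x : A) := by rw [e]
      _ = ρ g (ρ (g⁻¹ * h * g) (x : A)) := rfl
      _ = ρ g (x : A) := by rw [hx]⟩

/-- For a dendriform algebra with an action of a finite group `G`, the
dendriform coboundary of an invariant cochain is again invariant:
`δⁿ_H(c_H) ∘ (id ⊗ ψ_g^{⊗(n+1)}) = ψ_g ∘ δⁿ_K(c_K)`. -/
theorem coboundary_of_invariant_cochain_is_invariant {K A G : Type*} [Field K]
    [AddCommGroup A] [Module K A] [Group G] [Finite G]
    (pr sc : A →ₗ[K] A →ₗ[K] A)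
    (h1 : ∀ a b c : A, pr (pr a b) c = pr a (pr b c + sc b c))
    (h2 : ∀ a b c : A, pr (sc a b) c = sc a (pr b c))
    (h3 : ∀ a b c : A, sc (pr a b + sc a b) c = sc a (sc b c))
    (ρ : G →* Module.End K A)
    (hpr : ∀ (g : G) (a b : A), ρ g (pr a b) = pr (ρ g a) (ρ g b))
    (hsc : ∀ (g : G) (a b : A), ρ g (sc a b) = sc (ρ g a) (ρ g b))
    -- a subconjugacy relation `g⁻¹ H g ⊆ K'`
    (H K' : Subgroup G) (g : G) (hsub : ∀ h ∈ H, g⁻¹ * h * g ∈ K')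
    -- the restricted dendriform structures on `A^H` and on `A^K'`
    (πH : Fin 2 → (Fin 2 → fixedSubmodule ρ H) → fixedSubmodule ρ H)
    (hπH : ∀ (r : Fin 2) (x : Fin 2 → fixedSubmodule ρ H),
      ((πH r x : A)) = toC2 pr sc r (fun i => (x i : A)))
    (πK : Fin 2 → (Fin 2 → fixedSubmodule ρ K') → fixedSubmodule ρ K')
    (hπK : ∀ (r : Fin 2) (x : Fin 2 → fixedSubmodule ρ K'),
      ((πK r x : A)) = toC2 pr sc r (fun i => (x i : A)))
    -- an invariant `n`-cochain
    {n : ℕ}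
    (cH : Fin n → (Fin n → fixedSubmodule ρ H) → fixedSubmodule ρ H)
    (cK : Fin n → (Fin n → fixedSubmodule ρ K') → fixedSubmodule ρ K')
    (hc : ∀ (r : Fin n) (x : Fin n → fixedSubmodule ρ K'),
      cH r (fun i => psiMap ρ g H K' hsub (x i)) = psiMap ρ g H K' hsub (cK r x)) :
    ∀ (r : Fin (n + 1)) (x : Fin (n + 1) → fixedSubmodule ρ K'),
      dcob πH cH r (fun i => psiMap ρ g H K' hsub (x i)) =
        psiMap ρ g H K' hsub (dcob πK cK r x) := by

  classical
  -- `ψ` as a linear map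
  set ψl : fixedSubmodule ρ K' →ₗ[K] fixedSubmodule ρ H :=
    { toFun := psiMap ρ g H K' hsub
      map_add' := fun a b => Subtype.ext (by simp [psiMap])
      map_smul' := fun c a => Subtype.ext (by simp [psiMap]) } with hψl
  have hπ : ∀ (r : Fin 2) (u v : fixedSubmodule ρ K'),
      πH r ![ψl u, ψl v] = ψl (πK r ![u, v]) := by
    intro r u v
    apply Subtype.ext
    rw [hπH]
    show toC2 pr sc r (fun i => ((![ψl u, ψl v] : Fin 2 → _) i : A)) =
      ρ g ((πK r ![u, v] : A))
    rw [hπK]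
    fin_cases r <;>
      simp [toC2, psiMap, hpr, hsc, ψl]
  intro r x
  show dcob πH cH r (fun i => ψl (x i)) = ψl (dcob πK cK r x)
  have hcψ : ∀ (k : Fin n) (y : Fin n → fixedSubmodule ρ K'),
      cH k (fun j => ψl (y j)) = ψl (cK k y) := fun k y => hc k y
  unfold dcob
  rw [map_add, map_add]
  congr 1
  · congr 1
    · -- first term
      split_ifs with hr
      · rw [show (∑ k : Fin n, cH k fun j => ψl (x j.succ)) =
            ψl (∑ k : Fin n, cK k fun j => x j.succ) by
            rw [map_sum]; exact Finset.sum_congr rfl fun k _ => hcψ k _]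
        exact hπ 0 (x 0) _
      · rw [hcψ]
        exact hπ 1 (x 0) _
    · -- middle sum
      rw [map_sum]
      refine Finset.sum_congr rfl fun i _ => ?_
      rw [map_zsmul]
      congr 1
      rw [← hcψ]
      congr 1
      funext j
      split_ifs with h3' h4'
      · rfl
      · exact hπ 0 _ _
      · exact hπ 1 _ _
      · rw [map_add, ← hπ 0 _ _, ← hπ 1 _ _]
      · rfl
  · -- last term
    rw [map_zsmul]
    congr 1
    split_ifs with hrn
    · rw [show (∑ k : Fin n, cH k fun j => ψl (x j.castSucc)) =
          ψl (∑ k : Fin n, cK k fun j => x j.castSucc) by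
          rw [map_sum]; exact Finset.sum_congr rfl fun k _ => hcψ k _]
      exact hπ 1 _ _
    · rw [hcψ]
      exact hπ 0 _ _
end

section
/- Let $A$ be a dendriform algebra with an action of a finite group $G$ and let $(\mu^l_t, \mu^r_t)$ be an equivariant deformation of order $n$ (the dendriform identities hold modulo $t^{n+1}$). Define the obstruction 3-cochain $\mathrm{Ob} = -\sum_{p+q=n+1, p,q \geq 1} \pi_p \circ \pi_q \in C^3_G(A,A)$. Then $\mathrm{Ob}$ is a 3-cocycle in the equivariant dendriform cohomology, and the deformation extends to order $n+1$ if and only if the cohomology class of $\mathrm{Ob}$ vanishes. In particular, if $H^3_G(A,A) = 0$, every order-$n$ equivariant deformation extends to order $n+1$. -/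
/-- Circle product `f ∘ g = f ∘₁ g - f ∘₂ g` of two dendriform 2-cochains. -/
def circ22 {B : Type*} [AddCommGroup B]
    (f g : Fin 2 → (Fin 2 → B) → B) : Fin 3 → (Fin 3 → B) → B := fun r a =>
  (if _h : (r : ℕ) ≤ 1 then
      f 0 ![g ⟨(r : ℕ), by omega⟩ ![a 0, a 1], a 2]
    else
      f 1 ![g 0 ![a 0, a 1] + g 1 ![a 0, a 1], a 2])
  - (if _h : (r : ℕ) = 0 then
      f 0 ![a 0, g 0 ![a 1, a 2] + g 1 ![a 1, a 2]]
    else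
      f 1 ![a 0, g ⟨(r : ℕ) - 1, by have := r.isLt; omega⟩ ![a 1, a 2]])

/-- Multilinearity of a dendriform cochain. -/
def IsMultilin (K : Type*) {A : Type*} [Field K] [AddCommGroup A] [Module K A]
    {n : ℕ} (f : Fin n → (Fin n → A) → A) : Prop :=
  (∀ (r : Fin n) (a : Fin n → A) (i : Fin n) (x y : A),
    f r (Function.update a i (x + y)) =
      f r (Function.update a i x) + f r (Function.update a i y)) ∧
  (∀ (r : Fin n) (a : Fin n → A) (i : Fin n) (k : K) (x : A),
    f r (Function.update a i (k • x)) = k • f r (Function.update a i x))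

/-- The obstruction 3-cochain `Ob = -∑_{p+q=n+1, p,q ≥ 1} π_p ∘ π_q`. -/
def obCochain {K A : Type*} [Field K] [AddCommGroup A] [Module K A]
    (μl μr : ℕ → (A →ₗ[K] A →ₗ[K] A)) (n : ℕ) : Fin 3 → (Fin 3 → A) → A :=
  fun r a =>
    -∑ p ∈ Finset.Icc 1 n,
      circ22 (toC2 (μl p) (μr p)) (toC2 (μl (n + 1 - p)) (μr (n + 1 - p))) r a

/-! The circle product of bilinear 2-cochains is graded pre-Lie: the associator
`(f ∘ g) ∘ h - f ∘ (g ∘ h)` is alternating in `g, h`. On 2- and 3-cochains the coboundary is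
`δψ = -(π ∘ ψ + ψ ∘ π)` and `δF = π ∘ F - F ∘ π`. Put `P_m = ∑_{i+j=m} π_i ∘ π_j`. Summing the
associators `(π_i, π_j, π_k)` over `i + j + k = N` gives `π_0 ∘ P_N = P_N ∘ π_0` as soon as
`P_m = 0` for `m < N`, that is `δ P_N = 0`. For any choice of `π_{n+1}` one has
`P_{n+1} = -δπ_{n+1} - Ob`, so `δ Ob = 0` by `δ² = 0`, and `π_{n+1}` extends the deformation
exactly when `δπ_{n+1} = -Ob`. -/

open Finset

theorem Finset.Nat.sum_antidiagonal_sum_antidiagonal_assoc {M : Type*} [AddCommMonoid M]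
    (N : ℕ) (f : ℕ → ℕ → ℕ → M) :
    ∑ p ∈ antidiagonal N, ∑ q ∈ antidiagonal p.1, f q.1 q.2 p.2 =
      ∑ p ∈ antidiagonal N, ∑ q ∈ antidiagonal p.2, f p.1 q.1 q.2 := by
  simp only [Finset.sum_sigma']
  apply Finset.sum_nbij' (fun x => ⟨(x.2.1, x.2.2 + x.1.2), (x.2.2, x.1.2)⟩)
    (fun x => ⟨(x.1.1 + x.2.1, x.2.2), (x.1.1, x.2.1)⟩) <;>
    aesop (add simp [add_assoc])

abbrev DCochain (B : Type*) (n : ℕ) := Fin n → (Fin n → B) → B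

section Cochains

variable {B : Type*} [AddCommGroup B]

/- The circle products `f ∘ G = f ∘₁ G + f ∘₂ G` and `G ∘ g = G ∘₁ g - G ∘₂ g + G ∘₃ g`
of a 2-cochain with a 3-cochain. -/
def circ23 (f : DCochain B 2) (G : DCochain B 3) : DCochain B 4 := fun r a =>
  (if _h : (r : ℕ) ≤ 2 then f 0 ![G ⟨r, by omega⟩ ![a 0, a 1, a 2], a 3]
   else f 1 ![∑ k : Fin 3, G k ![a 0, a 1, a 2], a 3])
  + (if _h : (r : ℕ) = 0 then f 0 ![a 0, ∑ k : Fin 3, G k ![a 1, a 2, a 3]]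
     else f 1 ![a 0, G ⟨r - 1, by omega⟩ ![a 1, a 2, a 3]])

def circ32 (G : DCochain B 3) (g : DCochain B 2) : DCochain B 4 := fun r a =>
  (if _h : (r : ℕ) ≤ 1 then G 0 ![g ⟨r, by omega⟩ ![a 0, a 1], a 2, a 3]
   else G ⟨r - 1, by omega⟩ ![g 0 ![a 0, a 1] + g 1 ![a 0, a 1], a 2, a 3])
  - (if _h : (r : ℕ) = 0 then G 0 ![a 0, g 0 ![a 1, a 2] + g 1 ![a 1, a 2], a 3]
     else if _h2 : (r : ℕ) ≤ 2 then G 1 ![a 0, g ⟨r - 1, by omega⟩ ![a 1, a 2], a 3]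
     else G 2 ![a 0, g 0 ![a 1, a 2] + g 1 ![a 1, a 2], a 3])
  + (if _h : (r : ℕ) ≤ 1 then G ⟨r, by omega⟩ ![a 0, a 1, g 0 ![a 2, a 3] + g 1 ![a 2, a 3]]
     else G 2 ![a 0, a 1, g ⟨r - 2, by omega⟩ ![a 2, a 3]])

theorem dcob_two (π ψ : DCochain B 2) : dcob π ψ = -(circ22 π ψ + circ22 ψ π) := by
  -- `dcob` feeds `ψ` lambdas; eta-expanding `ψ` lets `simp` evaluate them.
  have hψ : ψ = fun k v => ψ k ![v 0, v 1] := by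
    funext k v; congr; exact (FinVec.etaExpand_eq v).symm
  funext r a
  rw [hψ]
  fin_cases r <;>
  · simp only [Pi.neg_apply, Pi.add_apply, dcob, circ22, Fin.sum_univ_two]
    norm_num
    abel

theorem dcob_three (π : DCochain B 2) (F : DCochain B 3) :
    dcob π F = circ23 π F - circ32 F π := by
  have hF : F = fun k v => F k ![v 0, v 1, v 2] := by
    funext k v; congr; exact (FinVec.etaExpand_eq v).symm
  funext r a
  rw [hF]
  fin_cases r <;>
  · simp only [Pi.sub_apply, dcob, circ32, circ23, Fin.sum_univ_three]
    norm_num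
    -- some atoms differ only in `Fin` literals elaborated at `Fin 2` versus `Fin (1 + 1)`
    abel!

theorem circ32_add (F F' : DCochain B 3) (g : DCochain B 2) :
    circ32 (F + F') g = circ32 F g + circ32 F' g := by
  funext r a
  simp only [circ32, Pi.add_apply]
  split_ifs <;> abel

theorem circ32_sum {ι : Type*} (s : Finset ι) (F : ι → DCochain B 3) (g : DCochain B 2) :
    circ32 (∑ i ∈ s, F i) g = ∑ i ∈ s, circ32 (F i) g :=
  map_sum (AddMonoidHom.mk' (circ32 · g) (circ32_add · · g)) F s

theorem circ32_neg (F : DCochain B 3) (g : DCochain B 2) : circ32 (-F) g = -circ32 F g :=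
  map_neg (AddMonoidHom.mk' (circ32 · g) (circ32_add · · g)) F

theorem circ32_zero (g : DCochain B 2) : circ32 0 g = 0 :=
  map_zero (AddMonoidHom.mk' (circ32 · g) (circ32_add · · g))

def circAssoc (f g h : DCochain B 2) : DCochain B 4 :=
  circ32 (circ22 f g) h - circ23 f (circ22 g h)

end Cochains

section Bilinear

variable {K A : Type*} [Field K] [AddCommGroup A] [Module K A]

theorem circ23_add (l r : A →ₗ[K] A →ₗ[K] A) (G G' : DCochain A 3) :
    circ23 (toC2 l r) (G + G') = circ23 (toC2 l r) G + circ23 (toC2 l r) G' := by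
  funext s a
  simp only [circ23, toC2, Pi.add_apply, Fin.sum_univ_three]
  split_ifs <;> simp only [Fin.isValue, Matrix.cons_val_zero, Matrix.cons_val_one, map_add,
    LinearMap.add_apply] <;> abel

theorem circ23_sum (l r : A →ₗ[K] A →ₗ[K] A) {ι : Type*} (s : Finset ι) (G : ι → DCochain A 3) :
    circ23 (toC2 l r) (∑ i ∈ s, G i) = ∑ i ∈ s, circ23 (toC2 l r) (G i) :=
  map_sum (AddMonoidHom.mk' (circ23 (toC2 l r)) (circ23_add l r)) G s

theorem circ23_neg (l r : A →ₗ[K] A →ₗ[K] A) (G : DCochain A 3) :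
    circ23 (toC2 l r) (-G) = -circ23 (toC2 l r) G :=
  map_neg (AddMonoidHom.mk' (circ23 (toC2 l r)) (circ23_add l r)) G

theorem circ23_zero (l r : A →ₗ[K] A →ₗ[K] A) : circ23 (toC2 l r) 0 = 0 :=
  map_zero (AddMonoidHom.mk' (circ23 (toC2 l r)) (circ23_add l r))

theorem dcob_add (l r : A →ₗ[K] A →ₗ[K] A) (F F' : DCochain A 3) :
    dcob (toC2 l r) (F + F') = dcob (toC2 l r) F + dcob (toC2 l r) F' := by
  simp only [dcob_three, circ23_add, circ32_add]
  abel

theorem dcob_neg (l r : A →ₗ[K] A →ₗ[K] A) (F : DCochain A 3) :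
    dcob (toC2 l r) (-F) = -dcob (toC2 l r) F := by
  simp only [dcob_three, circ23_neg, circ32_neg]
  abel

theorem dcob_toC2_neg (l₀ r₀ l r : A →ₗ[K] A →ₗ[K] A) :
    dcob (toC2 l₀ r₀) (toC2 (-l) (-r)) = -dcob (toC2 l₀ r₀) (toC2 l r) := by
  funext s a
  simp only [dcob_two, Pi.neg_apply, Pi.add_apply]
  fin_cases s <;> simp [circ22, toC2] <;> abel

theorem circAssoc_add_swap (fl fr gl gr hl hr : A →ₗ[K] A →ₗ[K] A) :
    circAssoc (toC2 fl fr) (toC2 gl gr) (toC2 hl hr) +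
      circAssoc (toC2 fl fr) (toC2 hl hr) (toC2 gl gr) = 0 := by
  funext s a
  fin_cases s <;>
    simp [circAssoc, circ32, circ23, circ22, toC2, Fin.sum_univ_three] <;> abel

theorem circAssoc_self_right (fl fr gl gr : A →ₗ[K] A →ₗ[K] A) :
    circAssoc (toC2 fl fr) (toC2 gl gr) (toC2 gl gr) = 0 := by
  funext s a
  fin_cases s <;>
    simp [circAssoc, circ32, circ23, circ22, toC2, Fin.sum_univ_three] <;> abel

end Bilinear

section Deformation

variable {K A : Type*} [Field K] [AddCommGroup A] [Module K A]

theorem dcob_dcob_toC2 (l₀ r₀ l r : A →ₗ[K] A →ₗ[K] A)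
    (h : circ22 (toC2 l₀ r₀) (toC2 l₀ r₀) = 0) :
    dcob (toC2 l₀ r₀) (dcob (toC2 l₀ r₀) (toC2 l r)) = 0 := by
  have hswap := circAssoc_add_swap l₀ r₀ l₀ r₀ l r
  have hself := circAssoc_self_right l r l₀ r₀
  rw [circAssoc, circAssoc, h, circ32_zero] at hswap
  rw [circAssoc, h, circ23_zero] at hself
  rw [dcob_two, dcob_three, circ23_neg, circ23_add, circ32_neg, circ32_add]
  linear_combination (norm := abel) hswap + hself

theorem sum_antidiagonal_circAssoc (l r : A →ₗ[K] A →ₗ[K] A) (μl μr : ℕ → (A →ₗ[K] A →ₗ[K] A))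
    (m : ℕ) :
    ∑ q ∈ antidiagonal m,
      circAssoc (toC2 l r) (toC2 (μl q.1) (μr q.1)) (toC2 (μl q.2) (μr q.2)) = 0 := by
  refine Finset.sum_involution (fun q _ => q.swap) (fun q _ => ?_) (fun q _ hne hq => ?_)
    (fun q hq => by simpa [add_comm] using hq) (fun q _ => q.swap_swap)
  · exact circAssoc_add_swap _ _ _ _ _ _
  · obtain ⟨i, j⟩ := q
    obtain rfl : j = i := (Prod.ext_iff.mp hq).1
    exact absurd (circAssoc_self_right _ _ _ _) hne

variable (μl μr : ℕ → (A →ₗ[K] A →ₗ[K] A))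

/-- `P_m = ∑_{i+j=m} π_i ∘ π_j`, so that `π_0, …, π_n` is an order-`n` deformation iff
`P_m = 0` for `m ≤ n`. -/
def circSum (m : ℕ) : DCochain A 3 :=
  ∑ p ∈ antidiagonal m, circ22 (toC2 (μl p.1) (μr p.1)) (toC2 (μl p.2) (μr p.2))

theorem circSum_apply (m : ℕ) (r : Fin 3) (a : Fin 3 → A) :
    circSum μl μr m r a = ∑ i ∈ range (m + 1),
      circ22 (toC2 (μl i) (μr i)) (toC2 (μl (m - i)) (μr (m - i))) r a := by
  rw [circSum, Finset.Nat.sum_antidiagonal_eq_sum_range_succ_mk]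
  simp only [Finset.sum_apply]

theorem circSum_succ (n : ℕ) :
    circSum μl μr (n + 1) =
      -dcob (toC2 (μl 0) (μr 0)) (toC2 (μl (n + 1)) (μr (n + 1))) - obCochain μl μr n := by
  funext r a
  simp only [dcob_two, Pi.sub_apply, Pi.neg_apply, Pi.add_apply]
  rw [circSum_apply, Finset.sum_range_succ, Finset.sum_range_succ', obCochain,
    ← Finset.Ico_add_one_right_eq_Icc, Finset.sum_Ico_eq_sum_range]
  simp only [Nat.add_sub_cancel, Nat.sub_zero, Nat.sub_self, Nat.add_sub_add_right, add_comm 1]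
  abel

theorem dcob_circSum_eq_zero {N : ℕ} (h : ∀ m < N, circSum μl μr m = 0) :
    dcob (toC2 (μl 0) (μr 0)) (circSum μl μr N) = 0 := by
  have hleft : circ23 (toC2 (μl 0) (μr 0)) (circSum μl μr N) =
      ∑ p ∈ antidiagonal N, circ23 (toC2 (μl p.1) (μr p.1)) (circSum μl μr p.2) := by
    rw [Finset.sum_eq_single_of_mem (0, N) (by simp)]
    rintro ⟨i, m⟩ hp hne
    rw [Finset.HasAntidiagonal.mem_antidiagonal] at hp
    rw [h m (by grind), circ23_zero]
  have hright : circ32 (circSum μl μr N) (toC2 (μl 0) (μr 0)) =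
      ∑ p ∈ antidiagonal N, circ32 (circSum μl μr p.1) (toC2 (μl p.2) (μr p.2)) := by
    rw [Finset.sum_eq_single_of_mem (N, 0) (by simp)]
    rintro ⟨m, k⟩ hp hne
    rw [Finset.HasAntidiagonal.mem_antidiagonal] at hp
    rw [h m (by grind), circ32_zero]
  rw [dcob_three, hleft, hright, ← neg_eq_zero, neg_sub]
  simp only [circSum, circ23_sum, circ32_sum]
  rw [Finset.Nat.sum_antidiagonal_sum_antidiagonal_assoc N
    (fun i j k => circ32 (circ22 (toC2 (μl i) (μr i)) (toC2 (μl j) (μr j))) (toC2 (μl k) (μr k)))]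
  simp only [← Finset.sum_sub_distrib]
  exact Finset.sum_eq_zero fun p _ => sum_antidiagonal_circAssoc _ _ μl μr p.2

theorem dcob_obCochain_eq_zero {n : ℕ} (h : ∀ m ≤ n, circSum μl μr m = 0) :
    dcob (toC2 (μl 0) (μr 0)) (obCochain μl μr n) = 0 := by
  have hOb : obCochain μl μr n =
      -(circSum μl μr (n + 1) + dcob (toC2 (μl 0) (μr 0)) (toC2 (μl (n + 1)) (μr (n + 1)))) := by
    rw [circSum_succ]
    abel
  have hπ₀ : circ22 (toC2 (μl 0) (μr 0)) (toC2 (μl 0) (μr 0)) = 0 := by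
    simpa [circSum] using h 0 (Nat.zero_le n)
  rw [hOb, dcob_neg, dcob_add, dcob_circSum_eq_zero μl μr (fun m hm => h m (by omega)),
    dcob_dcob_toC2 _ _ _ _ hπ₀, add_zero, neg_zero]

theorem obCochain_update (n : ℕ) (l r : A →ₗ[K] A →ₗ[K] A) :
    obCochain (Function.update μl (n + 1) l) (Function.update μr (n + 1) r) n =
      obCochain μl μr n := by
  funext s a
  refine congrArg Neg.neg (Finset.sum_congr rfl fun p hp => ?_)
  rw [Finset.mem_Icc] at hp
  simp only [Function.update_of_ne (show p ≠ n + 1 by omega),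
    Function.update_of_ne (show n + 1 - p ≠ n + 1 by omega)]

theorem extension_iff_dcob_eq_obCochain (n : ℕ) (l r : A →ₗ[K] A →ₗ[K] A) :
    (∀ (s : Fin 3) (a : Fin 3 → A), ∑ i ∈ range (n + 2),
      circ22 (toC2 (if i = n + 1 then l else μl i) (if i = n + 1 then r else μr i))
        (toC2 (if n + 1 - i = n + 1 then l else μl (n + 1 - i))
          (if n + 1 - i = n + 1 then r else μr (n + 1 - i))) s a = 0) ↔
      ∀ (s : Fin 3) (a : Fin 3 → A),
        dcob (toC2 (μl 0) (μr 0)) (toC2 (-l) (-r)) s a = obCochain μl μr n s a := by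
  have h : circSum (Function.update μl (n + 1) l) (Function.update μr (n + 1) r) (n + 1) = 0 ↔
      dcob (toC2 (μl 0) (μr 0)) (toC2 (-l) (-r)) = obCochain μl μr n := by
    rw [circSum_succ, obCochain_update, Function.update_self, Function.update_self,
      Function.update_of_ne (Nat.zero_ne_add_one n), Function.update_of_ne (Nat.zero_ne_add_one n),
      dcob_toC2_neg, sub_eq_zero]
  simpa only [funext_iff, Pi.zero_apply, circSum_apply, Function.update_apply] using h

end Deformation

section Invariance

variable {K A : Type*} [Field K] [AddCommGroup A] [Module K A]

theorem isMultilin_circ22_toC2 (fl fr gl gr : A →ₗ[K] A →ₗ[K] A) :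
    IsMultilin K (circ22 (toC2 fl fr) (toC2 gl gr)) := by
  constructor
  · intro s a i x y
    fin_cases s <;> fin_cases i <;>
      simp [circ22, toC2, map_add, LinearMap.add_apply] <;> abel
  · intro s a i k x
    fin_cases s <;> fin_cases i <;>
      simp [circ22, toC2, map_smul, LinearMap.smul_apply, smul_add, smul_sub]

theorem isMultilin_obCochain (μl μr : ℕ → (A →ₗ[K] A →ₗ[K] A)) (n : ℕ) :
    IsMultilin K (obCochain μl μr n) := by
  constructor
  · intro s a i x y
    simp only [obCochain, (isMultilin_circ22_toC2 _ _ _ _).1, Finset.sum_add_distrib, neg_add]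
  · intro s a i k x
    simp only [obCochain, (isMultilin_circ22_toC2 _ _ _ _).2, ← Finset.smul_sum, smul_neg]

theorem circ22_toC2_map (φ : A →ₗ[K] A) {fl fr gl gr : A →ₗ[K] A →ₗ[K] A}
    (hfl : ∀ a b, φ (fl a b) = fl (φ a) (φ b)) (hfr : ∀ a b, φ (fr a b) = fr (φ a) (φ b))
    (hgl : ∀ a b, φ (gl a b) = gl (φ a) (φ b)) (hgr : ∀ a b, φ (gr a b) = gr (φ a) (φ b))
    (s : Fin 3) (a : Fin 3 → A) :
    circ22 (toC2 fl fr) (toC2 gl gr) s (fun i => φ (a i)) =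
      φ (circ22 (toC2 fl fr) (toC2 gl gr) s a) := by
  fin_cases s <;> simp [circ22, toC2, hfl, hfr, hgl, hgr]

theorem obCochain_map (φ : A →ₗ[K] A) {μl μr : ℕ → (A →ₗ[K] A →ₗ[K] A)}
    (hμ : ∀ i a b, φ (μl i a b) = μl i (φ a) (φ b) ∧ φ (μr i a b) = μr i (φ a) (φ b))
    (n : ℕ) (s : Fin 3) (a : Fin 3 → A) :
    obCochain μl μr n s (fun i => φ (a i)) = φ (obCochain μl μr n s a) := by
  simp only [obCochain, map_neg, map_sum]
  refine congrArg Neg.neg (Finset.sum_congr rfl fun p _ => ?_)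
  exact circ22_toC2_map φ (fun a b => (hμ p a b).1) (fun a b => (hμ p a b).2)
    (fun a b => (hμ _ a b).1) (fun a b => (hμ _ a b).2) s a

end Invariance

theorem obstruction_is_cocycle_and_extension_general {K A G : Type*} [Field K]
    [AddCommGroup A] [Module K A] [Group G]
    (pr sc : A →ₗ[K] A →ₗ[K] A)
    (ρ : G →* Module.End K A)
    -- the order-`n` equivariant deformation
    (n : ℕ)
    (μl μr : ℕ → (A →ₗ[K] A →ₗ[K] A))
    (hl0 : μl 0 = pr) (hr0 : μr 0 = sc)
    (hequiv : ∀ (i : ℕ) (g : G) (a b : A),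
      ρ g (μl i a b) = μl i (ρ g a) (ρ g b) ∧ ρ g (μr i a b) = μr i (ρ g a) (ρ g b))
    (hdef : ∀ m ≤ n, ∀ (r : Fin 3) (a : Fin 3 → A),
      ∑ i ∈ Finset.range (m + 1),
        circ22 (toC2 (μl i) (μr i)) (toC2 (μl (m - i)) (μr (m - i))) r a = 0) :
    -- (1) the obstruction is a 3-cocycle
    (∀ (r : Fin 4) (a : Fin 4 → A),
      dcob (toC2 pr sc) (obCochain μl μr n) r a = 0) ∧
    -- (2) the deformation extends to order `n+1` iff the class of `Ob` vanishes
    ((∃ l' r' : A →ₗ[K] A →ₗ[K] A,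
        (∀ (g : G) (a b : A), ρ g (l' a b) = l' (ρ g a) (ρ g b)) ∧
        (∀ (g : G) (a b : A), ρ g (r' a b) = r' (ρ g a) (ρ g b)) ∧
        (∀ (r : Fin 3) (a : Fin 3 → A),
          ∑ i ∈ Finset.range (n + 2),
            circ22
              (toC2 (if i = n + 1 then l' else μl i) (if i = n + 1 then r' else μr i))
              (toC2 (if n + 1 - i = n + 1 then l' else μl (n + 1 - i))
                    (if n + 1 - i = n + 1 then r' else μr (n + 1 - i))) r a = 0)) ↔
      (∃ cl cr : A →ₗ[K] A →ₗ[K] A,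
        (∀ (g : G) (a b : A), ρ g (cl a b) = cl (ρ g a) (ρ g b)) ∧
        (∀ (g : G) (a b : A), ρ g (cr a b) = cr (ρ g a) (ρ g b)) ∧
        (∀ (r : Fin 3) (a : Fin 3 → A),
          dcob (toC2 pr sc) (toC2 cl cr) r a = obCochain μl μr n r a))) ∧
    -- (3) if `H³_G(A,A) = 0`, the deformation extends to order `n+1`
    ((∀ c : Fin 3 → (Fin 3 → A) → A, IsMultilin K c →
        (∀ (g : G) (r : Fin 3) (a : Fin 3 → A),
          c r (fun i => ρ g (a i)) = ρ g (c r a)) →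
        (∀ (r : Fin 4) (a : Fin 4 → A), dcob (toC2 pr sc) c r a = 0) →
        ∃ hl hr : A →ₗ[K] A →ₗ[K] A,
          (∀ (g : G) (a b : A), ρ g (hl a b) = hl (ρ g a) (ρ g b)) ∧
          (∀ (g : G) (a b : A), ρ g (hr a b) = hr (ρ g a) (ρ g b)) ∧
          (∀ (r : Fin 3) (a : Fin 3 → A),
            dcob (toC2 pr sc) (toC2 hl hr) r a = c r a)) →
      ∃ l' r' : A →ₗ[K] A →ₗ[K] A,
        (∀ (g : G) (a b : A), ρ g (l' a b) = l' (ρ g a) (ρ g b)) ∧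
        (∀ (g : G) (a b : A), ρ g (r' a b) = r' (ρ g a) (ρ g b)) ∧
        (∀ (r : Fin 3) (a : Fin 3 → A),
          ∑ i ∈ Finset.range (n + 2),
            circ22
              (toC2 (if i = n + 1 then l' else μl i) (if i = n + 1 then r' else μr i))
              (toC2 (if n + 1 - i = n + 1 then l' else μl (n + 1 - i))
                    (if n + 1 - i = n + 1 then r' else μr (n + 1 - i))) r a = 0)) := by
  subst hl0 hr0
  have hcoc : dcob (toC2 (μl 0) (μr 0)) (obCochain μl μr n) = 0 :=
    dcob_obCochain_eq_zero μl μr fun m hm =>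
      funext₂ fun r a => (circSum_apply μl μr m r a).trans (hdef m hm r a)
  have hext := extension_iff_dcob_eq_obCochain μl μr n
  have hneg : ∀ {f : A →ₗ[K] A →ₗ[K] A}, (∀ g a b, ρ g (f a b) = f (ρ g a) (ρ g b)) →
      ∀ g a b, ρ g ((-f) a b) = (-f) (ρ g a) (ρ g b) := fun hf g a b => by simp [hf]
  refine ⟨congrFun₂ hcoc, ⟨?_, ?_⟩, fun H => ?_⟩
  · rintro ⟨l, r, hl, hr, hlr⟩
    exact ⟨-l, -r, hneg hl, hneg hr, (hext l r).1 hlr⟩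
  · rintro ⟨cl, cr, hcl, hcr, hd⟩
    exact ⟨-cl, -cr, hneg hcl, hneg hcr, (hext _ _).2 (by simpa using hd)⟩
  · obtain ⟨cl, cr, hcl, hcr, hd⟩ := H _ (isMultilin_obCochain μl μr n)
      (fun g => obCochain_map (ρ g) (hequiv · g) n) (congrFun₂ hcoc)
    exact ⟨-cl, -cr, hneg hcl, hneg hcr, (hext _ _).2 (by simpa using hd)⟩

/-- For an order-`n` equivariant deformation of a dendriform algebra with a
finite group action, the obstruction `Ob = -∑_{p+q=n+1,p,q≥1} π_p ∘ π_q` is an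
equivariant 3-cocycle; the deformation extends to order `n+1` iff the class of
`Ob` vanishes; in particular, if `H³_G(A,A) = 0` then it extends. -/
theorem obstruction_is_cocycle_and_extension {K A G : Type*} [Field K]
    [AddCommGroup A] [Module K A] [Group G] [Finite G]
    (pr sc : A →ₗ[K] A →ₗ[K] A)
    (h1 : ∀ a b c : A, pr (pr a b) c = pr a (pr b c + sc b c))
    (h2 : ∀ a b c : A, pr (sc a b) c = sc a (pr b c))
    (h3 : ∀ a b c : A, sc (pr a b + sc a b) c = sc a (sc b c))
    (ρ : G →* Module.End K A)
    (hpr : ∀ (g : G) (a b : A), ρ g (pr a b) = pr (ρ g a) (ρ g b))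
    (hsc : ∀ (g : G) (a b : A), ρ g (sc a b) = sc (ρ g a) (ρ g b))
    -- the order-`n` equivariant deformation
    (n : ℕ)
    (μl μr : ℕ → (A →ₗ[K] A →ₗ[K] A))
    (hl0 : μl 0 = pr) (hr0 : μr 0 = sc)
    (hequiv : ∀ (i : ℕ) (g : G) (a b : A),
      ρ g (μl i a b) = μl i (ρ g a) (ρ g b) ∧ ρ g (μr i a b) = μr i (ρ g a) (ρ g b))
    (hdef : ∀ m ≤ n, ∀ (r : Fin 3) (a : Fin 3 → A),
      ∑ i ∈ Finset.range (m + 1),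
        circ22 (toC2 (μl i) (μr i)) (toC2 (μl (m - i)) (μr (m - i))) r a = 0) :
    -- (1) the obstruction is a 3-cocycle
    (∀ (r : Fin 4) (a : Fin 4 → A),
      dcob (toC2 pr sc) (obCochain μl μr n) r a = 0) ∧
    -- (2) the deformation extends to order `n+1` iff the class of `Ob` vanishes
    ((∃ l' r' : A →ₗ[K] A →ₗ[K] A,
        (∀ (g : G) (a b : A), ρ g (l' a b) = l' (ρ g a) (ρ g b)) ∧
        (∀ (g : G) (a b : A), ρ g (r' a b) = r' (ρ g a) (ρ g b)) ∧
        (∀ (r : Fin 3) (a : Fin 3 → A),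
          ∑ i ∈ Finset.range (n + 2),
            circ22
              (toC2 (if i = n + 1 then l' else μl i) (if i = n + 1 then r' else μr i))
              (toC2 (if n + 1 - i = n + 1 then l' else μl (n + 1 - i))
                    (if n + 1 - i = n + 1 then r' else μr (n + 1 - i))) r a = 0)) ↔
      (∃ cl cr : A →ₗ[K] A →ₗ[K] A,
        (∀ (g : G) (a b : A), ρ g (cl a b) = cl (ρ g a) (ρ g b)) ∧
        (∀ (g : G) (a b : A), ρ g (cr a b) = cr (ρ g a) (ρ g b)) ∧
        (∀ (r : Fin 3) (a : Fin 3 → A),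
          dcob (toC2 pr sc) (toC2 cl cr) r a = obCochain μl μr n r a))) ∧
    -- (3) if `H³_G(A,A) = 0`, the deformation extends to order `n+1`
    ((∀ c : Fin 3 → (Fin 3 → A) → A, IsMultilin K c →
        (∀ (g : G) (r : Fin 3) (a : Fin 3 → A),
          c r (fun i => ρ g (a i)) = ρ g (c r a)) →
        (∀ (r : Fin 4) (a : Fin 4 → A), dcob (toC2 pr sc) c r a = 0) →
        ∃ hl hr : A →ₗ[K] A →ₗ[K] A,
          (∀ (g : G) (a b : A), ρ g (hl a b) = hl (ρ g a) (ρ g b)) ∧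
          (∀ (g : G) (a b : A), ρ g (hr a b) = hr (ρ g a) (ρ g b)) ∧
          (∀ (r : Fin 3) (a : Fin 3 → A),
            dcob (toC2 pr sc) (toC2 hl hr) r a = c r a)) →
      ∃ l' r' : A →ₗ[K] A →ₗ[K] A,
        (∀ (g : G) (a b : A), ρ g (l' a b) = l' (ρ g a) (ρ g b)) ∧
        (∀ (g : G) (a b : A), ρ g (r' a b) = r' (ρ g a) (ρ g b)) ∧
        (∀ (r : Fin 3) (a : Fin 3 → A),
          ∑ i ∈ Finset.range (n + 2),
            circ22
              (toC2 (if i = n + 1 then l' else μl i) (if i = n + 1 then r' else μr i))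
              (toC2 (if n + 1 - i = n + 1 then l' else μl (n + 1 - i))
                    (if n + 1 - i = n + 1 then r' else μr (n + 1 - i))) r a = 0)) :=
  obstruction_is_cocycle_and_extension_general pr sc ρ n μl μr hl0 hr0 hequiv hdef
end
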